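/- Theorem (coherence bounds entanglement): Let |ψ⟩ be a pure state on L qubits, D a local product basis (e.g. any local Pauli basis), and R a subset of the qubits with reduced density matrix ρ_R = Tr_{R^c}[|ψ⟩⟨ψ|]. Then the entanglement entropy satisfies S(ρ_R) ≤ C(|ψ⟩,D), where C(|ψ⟩,D) is the relative entropy of coherence of |ψ⟩ in the basis D. -/

import Mathlib

/-!
Diagonalise `ρ_R = U diag(λ) U*`. In the product basis its diagonal is `ρ_R(a,a) = ∑ᵢ |U a i|² λᵢ`,
and `(|U a i|²)` is doubly stochastic, so Jensen's inequality for the concave `-x log x`, applied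
row by row and summed, gives `S(ρ_R) ≤ H(diag ρ_R)`. The diagonal of `ρ_R` is the marginal on `R`
of the outcome distribution `|ψ(s)|²`, and `-x log x` is subadditive on `[0, ∞)`, so marginalising
does not increase Shannon entropy.
-/

open scoped BigOperators

noncomputable section

/-- Shannon entropy in bits. -/
def shannonEntropy {ι : Type*} [Fintype ι] (P : ι → ℝ) : ℝ :=
  ∑ i, -(P i * Real.logb 2 (P i))

/-- von Neumann entropy in bits of a Hermitian matrix, via its eigenvalues. -/
def vonNeumannEntropy {n : Type*} [Fintype n] [DecidableEq n]
    (ρ : Matrix n n ℂ) (hρ : ρ.IsHermitian) : ℝ :=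
  ∑ i, -(hρ.eigenvalues i * Real.logb 2 (hρ.eigenvalues i))

/-- Glue a configuration on a region `R` with one on its complement. -/
def merge {L : ℕ} (R : Finset (Fin L)) (a : {i // i ∈ R} → Bool)
    (c : {i // i ∉ R} → Bool) : Fin L → Bool :=
  fun i => if h : i ∈ R then a ⟨i, h⟩ else c ⟨i, h⟩

/-- Reduced density matrix of the pure state `ψ` (an `L`-qubit state written in
a local product basis) on the region `R`, obtained by tracing out `Rᶜ`. -/
def reducedDM {L : ℕ} (R : Finset (Fin L)) (ψ : (Fin L → Bool) → ℂ) :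
    Matrix ({i // i ∈ R} → Bool) ({i // i ∈ R} → Bool) ℂ :=
  fun a b => ∑ c : {i // i ∉ R} → Bool, ψ (merge R a c) * star (ψ (merge R b c))

open Matrix Real
open scoped ComplexOrder

namespace Real

lemma negMulLog_add_le {x y : ℝ} (hx : 0 ≤ x) (hy : 0 ≤ y) :
    negMulLog (x + y) ≤ negMulLog x + negMulLog y := by
  have hlog_le {u : ℝ} (hu : 0 ≤ u) (hle : u ≤ x + y) : u * log u ≤ u * log (x + y) := by
    rcases hu.eq_or_lt with rfl | hu
    · simp
    · exact mul_le_mul_of_nonneg_left (log_le_log hu hle) hu.le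
  simp only [negMulLog, neg_mul, add_mul]
  linarith [hlog_le hx (le_add_of_nonneg_right hy), hlog_le hy (le_add_of_nonneg_left hx)]

lemma negMulLog_sum_le {ι : Type*} (s : Finset ι) {p : ι → ℝ} (hp : ∀ i ∈ s, 0 ≤ p i) :
    negMulLog (∑ i ∈ s, p i) ≤ ∑ i ∈ s, negMulLog (p i) :=
  Finset.le_sum_of_subadditive_on_pred _ (0 ≤ ·) (by simp)
    (fun _ _ => negMulLog_add_le) (fun _ _ => add_nonneg) p hp

end Real

lemma shannonEntropy_eq_sum_negMulLog_div {ι : Type*} [Fintype ι] (P : ι → ℝ) :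
    shannonEntropy P = (∑ i, negMulLog (P i)) / log 2 := by
  simp only [shannonEntropy, Finset.sum_div, negMulLog, logb]
  exact Finset.sum_congr rfl fun i _ => by ring

lemma shannonEntropy_le_shannonEntropy {ι κ : Type*} [Fintype ι] [Fintype κ]
    {P : ι → ℝ} {Q : κ → ℝ} (h : ∑ i, negMulLog (P i) ≤ ∑ j, negMulLog (Q j)) :
    shannonEntropy P ≤ shannonEntropy Q := by
  rw [shannonEntropy_eq_sum_negMulLog_div, shannonEntropy_eq_sum_negMulLog_div]
  exact div_le_div_of_nonneg_right h (log_nonneg one_le_two)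

lemma vonNeumannEntropy_eq_shannonEntropy {n : Type*} [Fintype n] [DecidableEq n]
    (ρ : Matrix n n ℂ) (hρ : ρ.IsHermitian) :
    vonNeumannEntropy ρ hρ = shannonEntropy hρ.eigenvalues :=
  rfl

lemma shannonEntropy_marginal_le {α β : Type*} [Fintype α] [Fintype β]
    {p : α × β → ℝ} (hp : 0 ≤ p) :
    shannonEntropy (fun a => ∑ b, p (a, b)) ≤ shannonEntropy p := by
  refine shannonEntropy_le_shannonEntropy ?_
  rw [Fintype.sum_prod_type]
  exact Finset.sum_le_sum fun a _ => negMulLog_sum_le _ fun b _ => hp (a, b)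

lemma ConcaveOn.sum_le_sum_mulVec_of_mem_doublyStochastic {n : Type*} [Fintype n]
    [DecidableEq n] {f : ℝ → ℝ}
    (hf : ConcaveOn ℝ (Set.Ici 0) f) {M : Matrix n n ℝ} (hM : M ∈ doublyStochastic ℝ n)
    {x : n → ℝ} (hx : 0 ≤ x) :
    ∑ j, f (x j) ≤ ∑ i, f ((M *ᵥ x) i) := by
  have jensen (i : n) : ∑ j, M i j * f (x j) ≤ f ((M *ᵥ x) i) := by
    simpa [mulVec, dotProduct] using
      hf.le_map_sum (t := Finset.univ) (fun j _ => nonneg_of_mem_doublyStochastic hM)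
        (sum_row_of_mem_doublyStochastic hM i) (fun j _ => hx j)
  calc ∑ j, f (x j) = ∑ j, (∑ i, M i j) * f (x j) := by
        simp only [sum_col_of_mem_doublyStochastic hM, one_mul]
    _ = ∑ i, ∑ j, M i j * f (x j) := by
        simp only [Finset.sum_mul]
        exact Finset.sum_comm
    _ ≤ ∑ i, f ((M *ᵥ x) i) := Finset.sum_le_sum fun i _ => jensen i

namespace Matrix

variable {n 𝕜 : Type*} [Fintype n] [DecidableEq n] [RCLike 𝕜]

lemma of_norm_sq_mem_doublyStochastic {U : Matrix n n 𝕜} (hU : U ∈ unitaryGroup n 𝕜) :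
    of (fun i j => ‖U i j‖ ^ 2) ∈ doublyStochastic ℝ n := by
  rw [mem_doublyStochastic_iff_sum]
  refine ⟨fun i j => sq_nonneg _, fun i => ?_, fun j => ?_⟩
  · have h := congr_fun₂ (mem_unitaryGroup_iff.mp hU) i i
    simp only [mul_apply, star_apply, RCLike.star_def, RCLike.mul_conj, one_apply_eq] at h
    simpa using (by exact_mod_cast h : ∑ j, ‖U i j‖ ^ 2 = (1 : ℝ))
  · have h := congr_fun₂ (mem_unitaryGroup_iff'.mp hU) j j
    simp only [mul_apply, star_apply, RCLike.star_def, RCLike.conj_mul, one_apply_eq] at h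
    simpa using (by exact_mod_cast h : ∑ i, ‖U i j‖ ^ 2 = (1 : ℝ))

lemma IsHermitian.apply_self_eq_mulVec_eigenvalues {A : Matrix n n 𝕜} (hA : A.IsHermitian)
    (a : n) :
    A a a = ((of fun i j => ‖(hA.eigenvectorUnitary : Matrix n n 𝕜) i j‖ ^ 2) *ᵥ
      hA.eigenvalues) a := by
  conv_lhs => rw [hA.spectral_theorem, Unitary.conjStarAlgAut_apply, mul_apply]
  simp only [mul_diagonal, star_apply, RCLike.star_def, mulVec, dotProduct, of_apply,
    Function.comp_apply]
  push_cast
  refine Finset.sum_congr rfl fun i _ => ?_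
  rw [← RCLike.mul_conj]
  ring

theorem PosSemidef.shannonEntropy_eigenvalues_le {A : Matrix n n 𝕜} (hA : A.PosSemidef) :
    shannonEntropy hA.isHermitian.eigenvalues ≤ shannonEntropy fun a => RCLike.re (A a a) := by
  have hdiag : (fun a => RCLike.re (A a a)) =
      (of fun i j => ‖(hA.isHermitian.eigenvectorUnitary : Matrix n n 𝕜) i j‖ ^ 2) *ᵥ
        hA.isHermitian.eigenvalues := by
    funext a
    rw [hA.isHermitian.apply_self_eq_mulVec_eigenvalues, RCLike.ofReal_re]
  rw [hdiag]
  exact shannonEntropy_le_shannonEntropy <|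
    concaveOn_negMulLog.sum_le_sum_mulVec_of_mem_doublyStochastic
      (of_norm_sq_mem_doublyStochastic hA.isHermitian.eigenvectorUnitary.2)
      hA.eigenvalues_nonneg

end Matrix

lemma shannonEntropy_comp_equiv {ι κ : Type*} [Fintype ι] [Fintype κ] (e : ι ≃ κ)
    (P : κ → ℝ) : shannonEntropy (P ∘ e) = shannonEntropy P :=
  Fintype.sum_equiv e _ _ fun _ => rfl

section ReducedDensityMatrix

variable {L : ℕ} (R : Finset (Fin L)) (ψ : (Fin L → Bool) → ℂ)

def mergeEquiv :
    (({i // i ∈ R} → Bool) × ({i // i ∉ R} → Bool)) ≃ (Fin L → Bool) where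
  toFun p := merge R p.1 p.2
  invFun s := (fun i => s i, fun i => s i)
  left_inv p := by
    ext i <;> simp [merge, i.2]
  right_inv s := by
    funext i
    simp only [merge]
    split <;> rfl

lemma reducedDM_eq_mul_conjTranspose :
    reducedDM R ψ =
      (of fun a c => ψ (merge R a c)) * (of fun a c => ψ (merge R a c))ᴴ := by
  ext a b
  simp [reducedDM, mul_apply, conjTranspose_apply]

lemma posSemidef_reducedDM : (reducedDM R ψ).PosSemidef := by
  rw [reducedDM_eq_mul_conjTranspose]
  exact posSemidef_self_mul_conjTranspose _

lemma re_reducedDM_apply_self (a : {i // i ∈ R} → Bool) :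
    (reducedDM R ψ a a).re = ∑ c, ‖ψ (merge R a c)‖ ^ 2 := by
  simp only [reducedDM, Complex.star_def, Complex.mul_conj', Complex.re_sum]
  norm_cast

lemma shannonEntropy_reducedDM_diag_le :
    shannonEntropy (fun a => RCLike.re (reducedDM R ψ a a)) ≤
      shannonEntropy fun s => ‖ψ s‖ ^ 2 := by
  simp only [RCLike.re_to_complex, re_reducedDM_apply_self]
  calc shannonEntropy (fun a => ∑ c, ‖ψ (merge R a c)‖ ^ 2)
      ≤ shannonEntropy fun x => ‖ψ (mergeEquiv R x)‖ ^ 2 :=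
        shannonEntropy_marginal_le (p := fun x => ‖ψ (mergeEquiv R x)‖ ^ 2)
          fun _ => sq_nonneg _
    _ = shannonEntropy fun s => ‖ψ s‖ ^ 2 :=
        shannonEntropy_comp_equiv (mergeEquiv R) fun s => ‖ψ s‖ ^ 2

end ReducedDensityMatrix

theorem entanglement_le_coherence_general {L : ℕ}
    (ψ : (Fin L → Bool) → ℂ)
    (R : Finset (Fin L)) (hR : (reducedDM R ψ).IsHermitian) :
    vonNeumannEntropy _ hR ≤ shannonEntropy (fun s => ‖ψ s‖ ^ 2) :=
  calc vonNeumannEntropy _ hR = shannonEntropy hR.eigenvalues :=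
        vonNeumannEntropy_eq_shannonEntropy _ hR
    _ ≤ shannonEntropy fun a => RCLike.re (reducedDM R ψ a a) :=
        (posSemidef_reducedDM R ψ).shannonEntropy_eigenvalues_le
    _ ≤ shannonEntropy fun s => ‖ψ s‖ ^ 2 := shannonEntropy_reducedDM_diag_le R ψ

/-- coherence bounds entanglement: for a pure `L`-qubit state `ψ`
written in a local product basis `D`, and any subset `R` of the qubits,
the entanglement entropy of `ρ_R` is bounded by the relative entropy of
coherence of `ψ` in `D`, which for a pure state is the Shannon entropy of
the outcome distribution `P(d) = |⟨d|ψ⟩|²`. -/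
theorem entanglement_le_coherence {L : ℕ}
    (ψ : (Fin L → Bool) → ℂ) (hnorm : ∑ s, ‖ψ s‖ ^ 2 = 1)
    (R : Finset (Fin L)) (hR : (reducedDM R ψ).IsHermitian) :
    vonNeumannEntropy _ hR ≤ shannonEntropy (fun s => ‖ψ s‖ ^ 2) :=
  entanglement_le_coherence_general ψ R hR
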